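/- The Peirce axiom scheme is equivalent to the rule ∨E: for the implicational calculus with MP, IPC1, IPC2, (all instances of ((A ⊃ B) ⊃ A) ⊃ A are theorems) if and only if (the theorems are closed under the rule: from ⊢ A ⊃ Q and ⊢ B ⊃ Q infer ⊢ ((A ⊃ B) ⊃ B) ⊃ Q). -/

import Mathlib

inductive Fm : Type
  | var : Nat → Fm
  | imp : Fm → Fm → Fm

inductive ThmP : Fm → Prop
  | ipc1 (A B : Fm) : ThmP (A.imp (B.imp A))
  | ipc2 (A B C : Fm) : ThmP ((A.imp (B.imp C)).imp ((A.imp B).imp (A.imp C)))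
  | ipc0 (A B : Fm) : ThmP (((A.imp B).imp A).imp A)
  | mp {A B : Fm} : ThmP (A.imp B) → ThmP A → ThmP B

inductive ThmV : Fm → Prop
  | ipc1 (A B : Fm) : ThmV (A.imp (B.imp A))
  | ipc2 (A B C : Fm) : ThmV ((A.imp (B.imp C)).imp ((A.imp B).imp (A.imp C)))
  | mp {A B : Fm} : ThmV (A.imp B) → ThmV A → ThmV B
  | veeE {A B Q : Fm} : ThmV (A.imp Q) → ThmV (B.imp Q) → ThmV (((A.imp B).imp B).imp Q)

/-!
Both directions are short natural-deduction arguments, made formal through the deduction theorem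
for the Hilbert calculus with hypotheses.

Peirce gives ∨E: under `(A ⊃ B) ⊃ B` and `Q ⊃ B`, the premise `A ⊃ Q` yields `A ⊃ B`, hence `B`,
hence `Q` by `B ⊃ Q`; so `(Q ⊃ B) ⊃ Q`, and Peirce's law for `Q, B` gives `Q`.

∨E gives Peirce: with `P = (A ⊃ B) ⊃ A`, both `A ⊃ (P ⊃ A)` and `B ⊃ (P ⊃ A)` hold, so ∨E gives
`((A ⊃ B) ⊃ B) ⊃ (P ⊃ A)`, while `P ⊃ ((A ⊃ B) ⊃ B)` holds outright.
-/

local infixr:25 " ⇒ " => Fm.imp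

inductive Derives (Ax : Fm → Prop) : List Fm → Fm → Prop
  | ax {Γ A} : Ax A → Derives Ax Γ A
  | hyp {Γ A} : A ∈ Γ → Derives Ax Γ A
  | ipc1 {Γ} (A B : Fm) : Derives Ax Γ (A ⇒ B ⇒ A)
  | ipc2 {Γ} (A B C : Fm) : Derives Ax Γ ((A ⇒ B ⇒ C) ⇒ (A ⇒ B) ⇒ A ⇒ C)
  | mp {Γ A B} : Derives Ax Γ (A ⇒ B) → Derives Ax Γ A → Derives Ax Γ B

namespace Derives

variable {Ax : Fm → Prop} {Γ : List Fm} {A B : Fm}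

theorem imp_self (A : Fm) : Derives Ax Γ (A ⇒ A) :=
  mp (mp (ipc2 A (A ⇒ A) A) (ipc1 A (A ⇒ A))) (ipc1 A A)

theorem imp_intro (h : Derives Ax (A :: Γ) B) : Derives Ax Γ (A ⇒ B) := by
  induction h with
  | ax h => exact mp (ipc1 _ _) (ax h)
  | hyp h =>
    rcases List.mem_cons.mp h with rfl | h
    · exact imp_self _
    · exact mp (ipc1 _ _) (hyp h)
  | ipc1 X Y => exact mp (ipc1 _ _) (ipc1 X Y)
  | ipc2 X Y Z => exact mp (ipc1 _ _) (ipc2 X Y Z)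
  | mp _ _ ihAB ihA => exact mp (mp (ipc2 _ _ _) ihAB) ihA

theorem mem_of_nil {T : Fm → Prop} (hax : ∀ A, Ax A → T A) (h1 : ∀ A B, T (A ⇒ B ⇒ A))
    (h2 : ∀ A B C, T ((A ⇒ B ⇒ C) ⇒ (A ⇒ B) ⇒ A ⇒ C))
    (hmp : ∀ {A B}, T (A ⇒ B) → T A → T B) (h : Derives Ax [] A) : T A := by
  induction h with
  | ax h => exact hax _ h
  | hyp h => simp at h
  | ipc1 X Y => exact h1 X Y
  | ipc2 X Y Z => exact h2 X Y Z
  | mp _ _ ihAB ihA => exact hmp ihAB ihA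

end Derives

theorem ThmP.of_derives {A : Fm} (h : Derives ThmP [] A) : ThmP A :=
  h.mem_of_nil (fun _ => id) ThmP.ipc1 ThmP.ipc2 ThmP.mp

theorem ThmV.of_derives {A : Fm} (h : Derives ThmV [] A) : ThmV A :=
  h.mem_of_nil (fun _ => id) ThmV.ipc1 ThmV.ipc2 ThmV.mp

theorem ThmP.veeE {A B Q : Fm} (hA : ThmP (A ⇒ Q)) (hB : ThmP (B ⇒ Q)) :
    ThmP (((A ⇒ B) ⇒ B) ⇒ Q) := by
  refine ThmP.of_derives (Derives.imp_intro ?_)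
  have hQ : Derives ThmP [Q ⇒ B, (A ⇒ B) ⇒ B] Q := by
    have hAB : Derives ThmP [Q ⇒ B, (A ⇒ B) ⇒ B] (A ⇒ B) :=
      Derives.imp_intro <| .mp (.hyp (by simp)) (.mp (.ax hA) (.hyp (by simp)))
    exact .mp (.ax hB) (.mp (.hyp (by simp)) hAB)
  exact .mp (.ax (ThmP.ipc0 Q B)) (Derives.imp_intro hQ)

theorem ThmV.peirce (A B : Fm) : ThmV (((A ⇒ B) ⇒ A) ⇒ A) := by
  set P : Fm := (A ⇒ B) ⇒ A
  have hB : ThmV (B ⇒ P ⇒ A) := ThmV.of_derives <| Derives.imp_intro <| Derives.imp_intro <|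
    .mp (.hyp (by simp [P])) (.mp (.ipc1 B A) (.hyp (by simp)))
  have hCases : ThmV (((A ⇒ B) ⇒ B) ⇒ P ⇒ A) := ThmV.veeE (ThmV.ipc1 A P) hB
  have hP : ThmV (P ⇒ (A ⇒ B) ⇒ B) := by
    refine ThmV.of_derives (Derives.imp_intro (Derives.imp_intro ?_))
    have hAB : Derives ThmV [A ⇒ B, P] (A ⇒ B) := .hyp (by simp)
    exact .mp hAB (.mp (.hyp (by simp [P])) hAB)
  exact ThmV.of_derives <| Derives.imp_intro <|
    .mp (.mp (.ax hCases) (.mp (.ax hP) (.hyp (by simp)))) (.hyp (by simp))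

theorem stmt_13 :
    (∀ A B Q : Fm, ThmP (A.imp Q) → ThmP (B.imp Q) → ThmP (((A.imp B).imp B).imp Q)) ∧
    (∀ A B : Fm, ThmV (((A.imp B).imp A).imp A)) :=
  ⟨fun _ _ _ => ThmP.veeE, ThmV.peirce⟩
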